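/- arXiv:2210.07468 — 5 statements merged into one kernel-verified Lean document; each statement's English description precedes it below -/
import Mathlib

section
/- Theorem 1 (referential opacity implies non-transparency): Let ⟦·|·⟧ be a language with denotations over an alphabet Σ that is compositional. If some context κ = (l, r) is referentially opaque, then the language is not strongly transparent; explicitly, there exist a string e and a context κ' such that ⟦e|κ'⟧ ≠ ∅ and ⟦e|κ'⟧ ≠ ⟦e|λ²⟧. -/
/-- A language with denotations over alphabet `α` with meanings in `V`:
`D e (l, r)` is the denotation `⟦e | (l, r)⟧ ∈ Option V`, with `none` marking invalidity. -/
def StronglyTransparent {α V : Type*} (D : List α → List α × List α → Option V) : Prop :=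
  ∀ (e : List α) (κ : List α × List α),
    (D e κ = D e ([], []) ∧ D e ([], []) ≠ none) ∨ D e κ = none

def ContextuallyValid {α V : Type*} (D : List α → List α × List α → Option V)
    (e : List α) (κ : List α × List α) : Prop :=
  D κ.1 ([], e ++ κ.2) ≠ none ∧ D e κ ≠ none ∧ D κ.2 (κ.1 ++ e, []) ≠ none

def Compositional {α V : Type*} (D : List α → List α × List α → Option V) : Prop :=
  ∃ f : Option V × Option V × Option V → Option V,
    ∀ l e r : List α,
      D (l ++ e ++ r) ([], []) = f (D l ([], e ++ r), D e (l, r), D r (l ++ e, []))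

def ReferentiallyOpaque {α V : Type*} (D : List α → List α × List α → Option V)
    (κ : List α × List α) : Prop :=
  ∃ e₁ e₂ : List α,
    ContextuallyValid D e₁ κ ∧ ContextuallyValid D e₂ κ ∧
    D e₁ ([], []) = D e₂ ([], []) ∧
    D (κ.1 ++ e₁ ++ κ.2) ([], []) ≠ D (κ.1 ++ e₂ ++ κ.2) ([], [])

/-- Theorem 1: a compositional language with a referentially opaque context is not
strongly transparent; explicitly, some expression has a context-dependent denotation. -/
theorem opacity_implies_nontransparency {α V : Type*}
    (D : List α → List α × List α → Option V)
    (hcomp : Compositional D)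
    (κ : List α × List α) (hop : ReferentiallyOpaque D κ) :
    ¬ StronglyTransparent D ∧
      ∃ (e : List α) (κ' : List α × List α),
        D e κ' ≠ none ∧ D e κ' ≠ D e ([], []) := by
  obtain ⟨f, hf⟩ := hcomp
  obtain ⟨e₁, e₂, ⟨hv1l, hv1e, hv1r⟩, ⟨hv2l, hv2e, hv2r⟩, heq, hneq⟩ := hop
  have key : ∃ (e : List α) (κ' : List α × List α),
      D e κ' ≠ none ∧ D e κ' ≠ D e ([], []) := by
    by_contra h
    push_neg at h
    have h1l := h κ.1 ([], e₁ ++ κ.2) hv1l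
    have h1e := h e₁ κ hv1e
    have h1r := h κ.2 (κ.1 ++ e₁, []) hv1r
    have h2l := h κ.1 ([], e₂ ++ κ.2) hv2l
    have h2e := h e₂ κ hv2e
    have h2r := h κ.2 (κ.1 ++ e₂, []) hv2r
    apply hneq
    rw [hf κ.1 e₁ κ.2, hf κ.1 e₂ κ.2, h1l, h2l, h1r, h2r, h1e, h2e, heq]
  refine ⟨fun hst => ?_, key⟩
  obtain ⟨e, κ', hne, hneq'⟩ := key
  rcases hst e κ' with ⟨h1, _⟩ | h2
  · exact hneq' h1
  · exact hne h2
end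

section
/- Substitution lemma for transparent compositional languages (contrapositive of Theorem 1): If a language with denotations is compositional and strongly transparent, then for every context (l, r) and all strings e₁, e₂ that are contextually valid in (l, r) and satisfy ⟦e₁|λ²⟧ = ⟦e₂|λ²⟧, it holds that ⟦l++e₁++r|λ²⟧ = ⟦l++e₂++r|λ²⟧; in particular, no context of the language is referentially opaque. -/
/-- Substitution lemma for transparent compositional languages: substituting an expression
occurrence by a contextually valid expression of equal standalone denotation preserves the
denotation of the whole sentence; in particular no context is referentially opaque. -/
theorem transparent_substitution {α V : Type*}
    (D : List α → List α × List α → Option V)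
    (hcomp : Compositional D) (htr : StronglyTransparent D) :
    (∀ (l r e₁ e₂ : List α),
      ContextuallyValid D e₁ (l, r) → ContextuallyValid D e₂ (l, r) →
      D e₁ ([], []) = D e₂ ([], []) →
      D (l ++ e₁ ++ r) ([], []) = D (l ++ e₂ ++ r) ([], [])) ∧
    (∀ κ : List α × List α, ¬ ReferentiallyOpaque D κ) := by
  obtain ⟨f, hf⟩ := hcomp
  have key : ∀ (l r e₁ e₂ : List α),
      ContextuallyValid D e₁ (l, r) → ContextuallyValid D e₂ (l, r) →
      D e₁ ([], []) = D e₂ ([], []) →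
      D (l ++ e₁ ++ r) ([], []) = D (l ++ e₂ ++ r) ([], []) := by
    intro l r e₁ e₂ h₁ h₂ he
    have eq : ∀ (e : List α) (κ : List α × List α), D e κ ≠ none → D e κ = D e ([], []) := by
      intro e κ h
      rcases htr e κ with ⟨h1, _⟩ | h1
      · exact h1
      · exact absurd h1 h
    rw [hf l e₁ r, hf l e₂ r,
      eq l _ h₁.1, eq e₁ _ h₁.2.1, eq r _ h₁.2.2,
      eq l _ h₂.1, eq e₂ _ h₂.2.1, eq r _ h₂.2.2, he]
  refine ⟨key, ?_⟩
  rintro ⟨l, r⟩ ⟨e₁, e₂, h₁, h₂, he, hne⟩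
  exact hne (key l r e₁ e₂ h₁ h₂ he)
end

section
/- Constituency of expression occurrences in L_t: If φ and ψ are propositional formulas and toString φ = l ++ toString ψ ++ r for some strings l, r over Σ₀, then there exists a one-hole formula context C such that φ = fill C ψ, l = leftStr C, and r = rightStr C. That is, every occurrence of an expression string inside a sentence string of L_t is the string of a constituent (subtree) occurrence, which is the structural content of L_t's strong transparency. -/
/-- Propositional formulas of the logic language. -/
inductive Φ : Type
  | tt : Φ
  | ff : Φ
  | neg : Φ → Φ
  | conj : Φ → Φ → Φ
  | disj : Φ → Φ → Φ
  deriving DecidableEq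

/-- Standard Boolean evaluation (the semantics of the transparent language `L_t`). -/
def eval : Φ → Bool
  | .tt => true
  | .ff => false
  | .neg φ => !eval φ
  | .conj φ ψ => eval φ && eval ψ
  | .disj φ ψ => eval φ || eval ψ

/-- One-hole formula contexts. -/
inductive Ctx : Type
  | hole : Ctx
  | negC : Ctx → Ctx
  | conjL : Ctx → Φ → Ctx
  | conjR : Φ → Ctx → Ctx
  | disjL : Ctx → Φ → Ctx
  | disjR : Φ → Ctx → Ctx

/-- Plug a formula into the hole of a context. -/
def fill : Ctx → Φ → Φ
  | .hole, φ => φ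
  | .negC C, φ => .neg (fill C φ)
  | .conjL C ψ, φ => .conj (fill C φ) ψ
  | .conjR χ C, φ => .conj χ (fill C φ)
  | .disjL C ψ, φ => .disj (fill C φ) ψ
  | .disjR χ C, φ => .disj χ (fill C φ)
/-- The seven-letter alphabet Σ₀ = {(, ), ∧, ∨, ¬, T, F}. -/
inductive Alph : Type
  | lp : Alph   -- (
  | rp : Alph   -- )
  | and : Alph  -- ∧
  | or : Alph   -- ∨
  | not : Alph  -- ¬
  | T : Alph
  | F : Alph
  deriving DecidableEq

/-- Fully parenthesized string encoding of formulas (the language `L_t`). -/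
def toStr : Φ → List Alph
  | .tt => [.T]
  | .ff => [.F]
  | .neg φ => [.lp, .not] ++ toStr φ ++ [.rp]
  | .conj φ ψ => [.lp] ++ toStr φ ++ [.and] ++ toStr ψ ++ [.rp]
  | .disj φ ψ => [.lp] ++ toStr φ ++ [.or] ++ toStr ψ ++ [.rp]
/-- The string to the left of the hole of a context. -/
def leftStr : Ctx → List Alph
  | .hole => []
  | .negC C => [.lp, .not] ++ leftStr C
  | .conjL C _ => [.lp] ++ leftStr C
  | .conjR φ C => [.lp] ++ toStr φ ++ [.and] ++ leftStr C
  | .disjL C _ => [.lp] ++ leftStr C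
  | .disjR φ C => [.lp] ++ toStr φ ++ [.or] ++ leftStr C

/-- The string to the right of the hole of a context. -/
def rightStr : Ctx → List Alph
  | .hole => []
  | .negC C => rightStr C ++ [.rp]
  | .conjL C ψ => rightStr C ++ [.and] ++ toStr ψ ++ [.rp]
  | .conjR _ C => rightStr C ++ [.rp]
  | .disjL C ψ => rightStr C ++ [.or] ++ toStr ψ ++ [.rp]
  | .disjR _ C => rightStr C ++ [.rp]


def balc : Alph → Int
  | .lp => 1
  | .rp => -1
  | _ => 0

def bal (s : List Alph) : Int := (s.map balc).sum

lemma bal_append (a b : List Alph) : bal (a ++ b) = bal a + bal b := by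
  simp [bal]

lemma bal_cons (x : Alph) (s : List Alph) : bal (x :: s) = balc x + bal s := by
  simp [bal]

lemma bal_nil : bal [] = 0 := rfl

lemma bal_toStr : ∀ φ, bal (toStr φ) = 0 := by
  intro φ
  induction φ <;> simp [toStr, bal_append, bal_cons, bal_nil, balc, *]

lemma toStr_cons (φ : Φ) : ∃ c t, toStr φ = c :: t ∧ (c = Alph.lp ∨ c = Alph.T ∨ c = Alph.F) := by
  cases φ with
  | tt => exact ⟨.T, [], rfl, by simp⟩
  | ff => exact ⟨.F, [], rfl, by simp⟩
  | neg a => exact ⟨.lp, .not :: (toStr a ++ [.rp]), by simp [toStr], by simp⟩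
  | conj a b => exact ⟨.lp, toStr a ++ .and :: (toStr b ++ [.rp]), by simp [toStr], by simp⟩
  | disj a b => exact ⟨.lp, toStr a ++ .or :: (toStr b ++ [.rp]), by simp [toStr], by simp⟩

lemma toStr_ne_nil (φ : Φ) : toStr φ ≠ [] := by
  obtain ⟨c, t, hct, _⟩ := toStr_cons φ
  simp [hct]

lemma nonneg_of_strong (φ : Φ)
    (hs : ∀ p q, toStr φ = p ++ q → p ≠ [] → q ≠ [] → 1 ≤ bal p)
    (p q : List Alph) (h : toStr φ = p ++ q) : 0 ≤ bal p := by
  rcases eq_or_ne p [] with rfl | hp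
  · simp [bal]
  rcases eq_or_ne q [] with rfl | hq
  · rw [List.append_nil] at h
    have h0 := bal_toStr φ
    rw [h] at h0
    omega
  · linarith [hs p q h hp hq]

lemma nonneg_rp (φ : Φ) (hn : ∀ p q, toStr φ = p ++ q → 0 ≤ bal p)
    (p q : List Alph) (h : toStr φ ++ [Alph.rp] = p ++ q) (hq : q ≠ []) : 0 ≤ bal p := by
  rcases List.append_eq_append_iff.mp h with ⟨a', h1, h2⟩ | ⟨c', h1, h2⟩
  · -- p = toStr φ ++ a', [rp] = a' ++ q
    rcases a' with _ | ⟨x, a2⟩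
    · rw [h1]
      simp only [List.append_nil]
      have h0 := bal_toStr φ
      omega
    · exfalso
      simp only [List.cons_append, List.cons.injEq] at h2
      obtain ⟨-, h3⟩ := h2
      exact hq (List.append_eq_nil_iff.mp h3.symm).2
  · exact hn p c' h1

lemma nonneg_bin (a b : Φ) (mid : Alph) (hmid : balc mid = 0)
    (hna : ∀ p q, toStr a = p ++ q → 0 ≤ bal p)
    (hnb : ∀ p q, toStr b = p ++ q → 0 ≤ bal p)
    (p q : List Alph) (h : toStr a ++ (mid :: (toStr b ++ [Alph.rp])) = p ++ q)
    (hq : q ≠ []) : 0 ≤ bal p := by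
  rcases List.append_eq_append_iff.mp h with ⟨a', h1, h2⟩ | ⟨c', h1, h2⟩
  · -- p = toStr a ++ a', mid :: (toStr b ++ [rp]) = a' ++ q
    rcases a' with _ | ⟨x, a2⟩
    · rw [h1]
      simp only [List.append_nil]
      have h0 := bal_toStr a
      omega
    · simp only [List.cons_append, List.cons.injEq] at h2
      obtain ⟨rfl, h3⟩ := h2
      have := nonneg_rp b hnb a2 q h3 hq
      rw [h1, bal_append, bal_cons, bal_toStr, hmid]
      omega
  · exact hna p c' h1

lemma bal_prefix : ∀ (φ : Φ) (p q : List Alph),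
    toStr φ = p ++ q → p ≠ [] → q ≠ [] → 1 ≤ bal p := by
  intro φ
  induction φ with
  | tt =>
    intro p q h hp hq
    rcases p with _ | ⟨x, p⟩
    · exact absurd rfl hp
    rcases q with _ | ⟨y, q⟩
    · exact absurd rfl hq
    have := congrArg List.length h
    simp [toStr] at this
  | ff =>
    intro p q h hp hq
    rcases p with _ | ⟨x, p⟩
    · exact absurd rfl hp
    rcases q with _ | ⟨y, q⟩
    · exact absurd rfl hq
    have := congrArg List.length h
    simp [toStr] at this
  | neg a ih =>
    intro p q h hp hq
    rcases p with _ | ⟨x, p⟩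
    · exact absurd rfl hp
    simp only [toStr, List.cons_append, List.nil_append, List.cons.injEq] at h
    obtain ⟨rfl, h⟩ := h
    rcases p with _ | ⟨y, p⟩
    · simp [bal, balc]
    simp only [List.cons_append, List.cons.injEq] at h
    obtain ⟨rfl, h⟩ := h
    have h0 := nonneg_rp a (nonneg_of_strong a ih) p q h hq
    rw [bal_cons, bal_cons]
    simp only [balc]
    omega
  | conj a b iha ihb =>
    intro p q h hp hq
    rcases p with _ | ⟨x, p⟩
    · exact absurd rfl hp
    simp only [toStr, List.cons_append, List.nil_append, List.append_assoc,
      List.cons.injEq] at h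
    obtain ⟨rfl, h⟩ := h
    have h0 := nonneg_bin a b .and rfl (nonneg_of_strong a iha)
      (nonneg_of_strong b ihb) p q h hq
    rw [bal_cons]
    simp only [balc]
    omega
  | disj a b iha ihb =>
    intro p q h hp hq
    rcases p with _ | ⟨x, p⟩
    · exact absurd rfl hp
    simp only [toStr, List.cons_append, List.nil_append, List.append_assoc,
      List.cons.injEq] at h
    obtain ⟨rfl, h⟩ := h
    have h0 := nonneg_bin a b .or rfl (nonneg_of_strong a iha)
      (nonneg_of_strong b ihb) p q h hq
    rw [bal_cons]
    simp only [balc]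
    omega

lemma bal_prefix_nonneg (φ : Φ) (p q : List Alph) (h : toStr φ = p ++ q) : 0 ≤ bal p :=
  nonneg_of_strong φ (bal_prefix φ) p q h

lemma toStr_cancel : ∀ φ ψ : Φ, ∀ x y : List Alph,
    toStr φ ++ x = toStr ψ ++ y → φ = ψ ∧ x = y := by
  intro φ
  induction φ with
  | tt =>
    intro ψ x y h
    cases ψ with
    | tt => simp [toStr] at h; exact ⟨rfl, h⟩
    | ff => simp [toStr] at h
    | neg b => simp [toStr] at h
    | conj b c => simp [toStr] at h
    | disj b c => simp [toStr] at h
  | ff =>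
    intro ψ x y h
    cases ψ with
    | ff => simp [toStr] at h; exact ⟨rfl, h⟩
    | tt => simp [toStr] at h
    | neg b => simp [toStr] at h
    | conj b c => simp [toStr] at h
    | disj b c => simp [toStr] at h
  | neg a ih =>
    intro ψ x y h
    cases ψ with
    | tt => simp [toStr] at h
    | ff => simp [toStr] at h
    | neg b =>
      simp only [toStr, List.cons_append, List.nil_append, List.append_assoc,
        List.cons.injEq, List.singleton_append, true_and] at h
      obtain ⟨rfl, h2⟩ := ih b _ _ h
      injection h2 with _ h3
      exact ⟨rfl, h3⟩
    | conj b c =>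
      exfalso
      obtain ⟨cc, t, hct, hc⟩ := toStr_cons b
      rw [show toStr (Φ.neg a) = _ from rfl] at h
      rcases hc with rfl | rfl | rfl <;>
        simp [toStr, hct] at h
    | disj b c =>
      exfalso
      obtain ⟨cc, t, hct, hc⟩ := toStr_cons b
      rcases hc with rfl | rfl | rfl <;>
        simp [toStr, hct] at h
  | conj a b iha ihb =>
    intro ψ x y h
    cases ψ with
    | tt => simp [toStr] at h
    | ff => simp [toStr] at h
    | neg c =>
      exfalso
      obtain ⟨cc, t, hct, hc⟩ := toStr_cons a
      rcases hc with rfl | rfl | rfl <;>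
        simp [toStr, hct] at h
    | conj c d =>
      simp only [toStr, List.cons_append, List.nil_append, List.append_assoc,
        List.cons.injEq, List.singleton_append, true_and] at h
      obtain ⟨rfl, h2⟩ := iha c _ _ h
      injection h2 with _ h3
      obtain ⟨rfl, h4⟩ := ihb d _ _ h3
      injection h4 with _ h5
      exact ⟨rfl, h5⟩
    | disj c d =>
      exfalso
      simp only [toStr, List.cons_append, List.nil_append, List.append_assoc,
        List.cons.injEq, List.singleton_append, true_and] at h
      obtain ⟨rfl, h2⟩ := iha c _ _ h
      simp at h2
  | disj a b iha ihb =>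
    intro ψ x y h
    cases ψ with
    | tt => simp [toStr] at h
    | ff => simp [toStr] at h
    | neg c =>
      exfalso
      obtain ⟨cc, t, hct, hc⟩ := toStr_cons a
      rcases hc with rfl | rfl | rfl <;>
        simp [toStr, hct] at h
    | disj c d =>
      simp only [toStr, List.cons_append, List.nil_append, List.append_assoc,
        List.cons.injEq, List.singleton_append, true_and] at h
      obtain ⟨rfl, h2⟩ := iha c _ _ h
      injection h2 with _ h3
      obtain ⟨rfl, h4⟩ := ihb d _ _ h3
      injection h4 with _ h5
      exact ⟨rfl, h5⟩
    | conj c d =>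
      exfalso
      simp only [toStr, List.cons_append, List.nil_append, List.append_assoc,
        List.cons.injEq, List.singleton_append, true_and] at h
      obtain ⟨rfl, h2⟩ := iha c _ _ h
      simp at h2

lemma split3 {α : Type} (A B l S r : List α) (h : A ++ B = l ++ (S ++ r)) :
    (∃ r1, A = l ++ (S ++ r1) ∧ r = r1 ++ B) ∨
    (∃ l1, l = A ++ l1 ∧ B = l1 ++ (S ++ r)) ∨
    (∃ p q, S = p ++ q ∧ p ≠ [] ∧ q ≠ [] ∧ A = l ++ p ∧ B = q ++ r) := by
  rcases List.append_eq_append_iff.mp h with ⟨a', h1, h2⟩ | ⟨c', h1, h2⟩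
  · right; left
    exact ⟨a', h1, h2⟩
  · rcases List.append_eq_append_iff.mp h2.symm with ⟨u, g1, g2⟩ | ⟨v, g1, g2⟩
    · -- A = l ++ c', S = c' ++ u, B = u ++ r
      rcases eq_or_ne c' [] with rfl | hc
      · right; left
        refine ⟨[], by simpa using h1.symm, ?_⟩
        simp only [List.nil_append] at g1 ⊢
        rw [g2, g1]
      rcases eq_or_ne u [] with rfl | hu
      · left
        refine ⟨[], ?_, ?_⟩
        · rw [h1]
          simp only [List.append_nil] at g1
          rw [g1]
          simp
        · simpa using g2.symm
      · right; right
        exact ⟨c', u, g1, hc, hu, h1, g2⟩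
    · -- A = l ++ c', c' = S ++ v, r = v ++ B
      left
      exact ⟨v, by rw [h1, g1], g2⟩

lemma locate_rp (b ψ : Φ) (l r : List Alph)
    (h : toStr b ++ [Alph.rp] = l ++ (toStr ψ ++ r)) :
    ∃ r1, toStr b = l ++ (toStr ψ ++ r1) ∧ r = r1 ++ [Alph.rp] := by
  rcases split3 _ _ _ _ _ h with ⟨r1, h1, h2⟩ | ⟨l1, h1, h2⟩ | ⟨p, q, hS, hp, hq, h1, h2⟩
  · exact ⟨r1, h1, h2⟩
  · exfalso
    obtain ⟨c, t, hct, hc⟩ := toStr_cons ψ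
    rcases l1 with _ | ⟨x, l1⟩ <;>
      rcases hc with rfl | rfl | rfl <;>
        simp [hct] at h2
  · exfalso
    have hb1 : 1 ≤ bal p := bal_prefix ψ p q hS hp hq
    have hl : 0 ≤ bal l := bal_prefix_nonneg b l p h1
    have h0 : bal l + bal p = 0 := by rw [← bal_append, ← h1, bal_toStr]
    omega

lemma locate_bin (a b ψ : Φ) (mid : Alph)
    (hmid : mid = Alph.and ∨ mid = Alph.or)
    (l r : List Alph)
    (h : toStr a ++ (mid :: (toStr b ++ [Alph.rp])) = l ++ (toStr ψ ++ r)) :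
    (∃ r1, toStr a = l ++ (toStr ψ ++ r1) ∧ r = r1 ++ (mid :: (toStr b ++ [Alph.rp]))) ∨
    (∃ l2 r2, l = toStr a ++ (mid :: l2) ∧ toStr b = l2 ++ (toStr ψ ++ r2) ∧
      r = r2 ++ [Alph.rp]) := by
  rcases split3 _ _ _ _ _ h with ⟨r1, h1, h2⟩ | ⟨l1, h1, h2⟩ | ⟨p, q, hS, hp, hq, h1, h2⟩
  · left; exact ⟨r1, h1, h2⟩
  · rcases l1 with _ | ⟨x, l1⟩
    · exfalso
      obtain ⟨c, t, hct, hc⟩ := toStr_cons ψ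
      rcases hc with rfl | rfl | rfl <;> rcases hmid with rfl | rfl <;>
        simp [hct] at h2
    · simp only [List.cons_append, List.cons.injEq] at h2
      obtain ⟨rfl, h3⟩ := h2
      obtain ⟨r2, g1, g2⟩ := locate_rp b ψ l1 r h3
      right
      exact ⟨l1, r2, h1, g1, g2⟩
  · exfalso
    have hb1 : 1 ≤ bal p := bal_prefix ψ p q hS hp hq
    have hl : 0 ≤ bal l := bal_prefix_nonneg a l p h1
    have h0 : bal l + bal p = 0 := by rw [← bal_append, ← h1, bal_toStr]
    omega

/-- Constituency of expression occurrences in `L_t`: every occurrence of an expression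
string inside a sentence string of `L_t` is the string of a constituent (subtree)
occurrence. -/
theorem occurrence_is_constituent (φ ψ : Φ) (l r : List Alph)
    (h : toStr φ = l ++ toStr ψ ++ r) :
    ∃ C : Ctx, φ = fill C ψ ∧ l = leftStr C ∧ r = rightStr C := by
  induction φ generalizing l r with
  | tt =>
    rcases l with _ | ⟨x, l⟩
    · obtain ⟨rfl, rfl⟩ := toStr_cancel ψ Φ.tt r [] (by simpa using h.symm)
      exact ⟨.hole, rfl, rfl, rfl⟩
    · exfalso
      obtain ⟨c, t, hct, -⟩ := toStr_cons ψ
      rw [hct] at h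
      simp [toStr] at h
  | ff =>
    rcases l with _ | ⟨x, l⟩
    · obtain ⟨rfl, rfl⟩ := toStr_cancel ψ Φ.ff r [] (by simpa using h.symm)
      exact ⟨.hole, rfl, rfl, rfl⟩
    · exfalso
      obtain ⟨c, t, hct, -⟩ := toStr_cons ψ
      rw [hct] at h
      simp [toStr] at h
  | neg a ih =>
    rcases l with _ | ⟨x, l⟩
    · obtain ⟨rfl, rfl⟩ := toStr_cancel ψ (Φ.neg a) r [] (by simpa using h.symm)
      exact ⟨.hole, rfl, rfl, rfl⟩
    · simp only [toStr, List.cons_append, List.nil_append, List.append_assoc,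
        List.cons.injEq, true_and] at h
      obtain ⟨rfl, h⟩ := h
      rcases l with _ | ⟨y, l⟩
      · exfalso
        obtain ⟨c, t, hct, hc⟩ := toStr_cons ψ
        rcases hc with rfl | rfl | rfl <;> simp [hct] at h
      · simp only [List.cons_append, List.cons.injEq] at h
        obtain ⟨rfl, h⟩ := h
        obtain ⟨r1, g1, g2⟩ := locate_rp a ψ l r h
        obtain ⟨C, rfl, rfl, rfl⟩ := ih l r1 (by simpa using g1)
        exact ⟨.negC C, rfl, by simp [leftStr], by simp [rightStr, g2]⟩
  | conj a b iha ihb =>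
    rcases l with _ | ⟨x, l⟩
    · obtain ⟨rfl, rfl⟩ := toStr_cancel ψ (Φ.conj a b) r [] (by simpa using h.symm)
      exact ⟨.hole, rfl, rfl, rfl⟩
    · simp only [toStr, List.cons_append, List.nil_append, List.append_assoc,
        List.cons.injEq, true_and, List.singleton_append] at h
      obtain ⟨rfl, h⟩ := h
      rcases locate_bin a b ψ .and (Or.inl rfl) l r h with
        ⟨r1, g1, g2⟩ | ⟨l2, r2, g0, g1, g2⟩
      · obtain ⟨C, rfl, rfl, rfl⟩ := iha l r1 (by simpa using g1)
        refine ⟨.conjL C b, rfl, by simp [leftStr], ?_⟩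
        rw [g2]
        simp [rightStr]
      · obtain ⟨C, rfl, rfl, rfl⟩ := ihb l2 r2 (by simpa using g1)
        refine ⟨.conjR a C, rfl, ?_, ?_⟩
        · rw [g0]
          simp [leftStr]
        · rw [g2]
          simp [rightStr]
  | disj a b iha ihb =>
    rcases l with _ | ⟨x, l⟩
    · obtain ⟨rfl, rfl⟩ := toStr_cancel ψ (Φ.disj a b) r [] (by simpa using h.symm)
      exact ⟨.hole, rfl, rfl, rfl⟩
    · simp only [toStr, List.cons_append, List.nil_append, List.append_assoc,
        List.cons.injEq, true_and, List.singleton_append] at h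
      obtain ⟨rfl, h⟩ := h
      rcases locate_bin a b ψ .or (Or.inr rfl) l r h with
        ⟨r1, g1, g2⟩ | ⟨l2, r2, g0, g1, g2⟩
      · obtain ⟨C, rfl, rfl, rfl⟩ := iha l r1 (by simpa using g1)
        refine ⟨.disjL C b, rfl, by simp [leftStr], ?_⟩
        rw [g2]
        simp [rightStr]
      · obtain ⟨C, rfl, rfl, rfl⟩ := ihb l2 r2 (by simpa using g1)
        refine ⟨.disjR a C, rfl, ?_, ?_⟩
        · rw [g0]
          simp [leftStr]
        · rw [g2]
          simp [rightStr]
end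

section
/- L_n admits a referentially opaque context: There exist propositional formulas ψ, ψ' and a one-hole formula context C such that evalN ψ (false, false) = evalN ψ' (false, false) (the two expressions have equal L_n denotations in the empty context) but evalN (fill C ψ) (false, false) ≠ evalN (fill C ψ') (false, false). Concretely, ψ = tt (the literal T), ψ' = neg ff (the formula (¬F)), and C = disjR (neg tt) hole (the context "((¬T) ∨ _)") witness this: both ψ and ψ' denote true standalone, yet evalN of ((¬T) ∨ T) is false while evalN of ((¬T) ∨ (¬F)) is true. -/
/-- Is a formula syntactically `(¬T)`? -/
def isNegT (χ : Φ) : Bool := χ = Φ.neg Φ.tt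

/-- Is a formula syntactically `(¬F)`? -/
def isNegF (χ : Φ) : Bool := χ = Φ.neg Φ.ff

/-- Evaluation of the perturbed non-transparent language `L_n`, taking a pair of
inversion flags `(iT, iF)`; a sibling `(¬T)` sets the `T`-inversion flag for its
sibling subtree, and `(¬F)` the `F`-inversion flag. -/
def evalN : Φ → Bool × Bool → Bool
  | .tt, (iT, _) => if iT then false else true
  | .ff, (_, iF) => if iF then true else false
  | .neg φ, p => !evalN φ p
  | .conj φ ψ, (iT, iF) =>
      evalN φ (iT || isNegT ψ, iF || isNegF ψ) && evalN ψ (iT || isNegT φ, iF || isNegF φ)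
  | .disj φ ψ, (iT, iF) =>
      evalN φ (iT || isNegT ψ, iF || isNegF ψ) || evalN ψ (iT || isNegT φ, iF || isNegF φ)

/-- The inversion flags accumulated along the path from the root of a context to its
hole, starting from `(false, false)` and OR-ing in the sibling indicators at each
binary constructor. -/
def flags : Ctx → Bool × Bool
  | .hole => (false, false)
  | .negC C => flags C
  | .conjL C ψ => ((flags C).1 || isNegT ψ, (flags C).2 || isNegF ψ)
  | .conjR φ C => ((flags C).1 || isNegT φ, (flags C).2 || isNegF φ)
  | .disjL C ψ => ((flags C).1 || isNegT ψ, (flags C).2 || isNegF ψ)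
  | .disjR φ C => ((flags C).1 || isNegT φ, (flags C).2 || isNegF φ)

/-- `L_n` admits a referentially opaque context: `T` and `(¬F)` have equal `L_n`
denotations standalone, yet embedding them in the context `((¬T) ∨ _)` yields
formulas with different `L_n` denotations. -/
theorem Ln_referentially_opaque :
    ∃ (ψ ψ' : Φ) (C : Ctx),
      ψ = Φ.tt ∧ ψ' = Φ.neg Φ.ff ∧ C = Ctx.disjR (Φ.neg Φ.tt) Ctx.hole ∧
      evalN ψ (false, false) = evalN ψ' (false, false) ∧
      evalN (fill C ψ) (false, false) ≠ evalN (fill C ψ') (false, false) := by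
  exact ⟨_,_,_,rfl,rfl,rfl,by decide,by decide⟩
end

section
/- Conservativity of the L_n perturbation: If a propositional formula φ contains no subformula syntactically equal to neg tt (i.e., (¬T)) and no subformula syntactically equal to neg ff (i.e., (¬F)), then its L_n denotation coincides with its L_t denotation: evalN φ (false, false) = eval φ. Thus the perturbed semantics of L_n differs from the standard semantics only through the side effect of ¬ applied directly to a literal. -/
/-- `φ` contains no subformula syntactically equal to `(¬T)` or `(¬F)`. -/
def NoNegLiteral : Φ → Prop
  | Φ.tt => True
  | Φ.ff => True
  | Φ.neg φ => Φ.neg φ ≠ Φ.neg Φ.tt ∧ Φ.neg φ ≠ Φ.neg Φ.ff ∧ NoNegLiteral φ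
  | Φ.conj φ ψ => NoNegLiteral φ ∧ NoNegLiteral ψ
  | Φ.disj φ ψ => NoNegLiteral φ ∧ NoNegLiteral ψ


lemma noNeg_isNegT {χ : Φ} (h : NoNegLiteral χ) : isNegT χ = false := by
  cases χ <;> simp_all [NoNegLiteral, isNegT]

lemma noNeg_isNegF {χ : Φ} (h : NoNegLiteral χ) : isNegF χ = false := by
  cases χ <;> simp_all [NoNegLiteral, isNegF]

/-- Conservativity of the `L_n` perturbation: on formulas containing no subformula
`(¬T)` or `(¬F)`, the `L_n` denotation coincides with the `L_t` denotation. -/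
theorem evalN_eq_eval_of_noNegLiteral (φ : Φ) (h : NoNegLiteral φ) :
    evalN φ (false, false) = eval φ := by
  induction φ with
  | tt => rfl
  | ff => rfl
  | neg φ ih =>
      simp only [NoNegLiteral] at h
      simp [evalN, eval, ih h.2.2]
  | conj φ ψ ih1 ih2 =>
      obtain ⟨h1, h2⟩ := h
      simp [evalN, eval, noNeg_isNegT h1, noNeg_isNegT h2, noNeg_isNegF h1,
        noNeg_isNegF h2, ih1 h1, ih2 h2]
  | disj φ ψ ih1 ih2 =>
      obtain ⟨h1, h2⟩ := h
      simp [evalN, eval, noNeg_isNegT h1, noNeg_isNegT h2, noNeg_isNegF h1,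
        noNeg_isNegF h2, ih1 h1, ih2 h2]
end
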